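/- If A is in ARI_{al*al} (A alternal, swap(A) alternal up to addition of a constant-valued mould, and A_1 an even function), then A is invariant under neg∘push. -/

import Mathlib

/-!
An alternal mould `B` is `mantar`-invariant: peeling off the last letter with the shuffle
relations gives `B (w.reverse) = (-1)^(r-1) B w` in depth `r ≥ 1`. Let `v` be the v-word with
`swap v = u`. Apply this to the alternal mould `swap A + C` at `v.reverse` and to `A` at
`swap (v.reverse)`, whose reversal is `(-u₂, …, -u_r, u₁ + ⋯ + u_r)`. This yields
`A (-u₂, …, -u_r, u₁ + ⋯ + u_r) = A u + (1 - (-1)^(r-1)) C_r`. At `u = 0` both `A`-terms agree,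
so the constant term vanishes, and what remains is `neg ∘ push`-invariance read backwards.
-/

open List

variable {K : Type*} [Field K] [CharZero K]

/-- The multiset (as a list, with multiplicity) of shuffles of two words. -/
def shuffles {α : Type*} : List α → List α → List (List α)
  | [], v => [v]
  | u, [] => [u]
  | x :: u, y :: v =>
      ((shuffles u (y :: v)).map (x :: ·)) ++ ((shuffles (x :: u) v).map (y :: ·))
  termination_by u v => u.length + v.length

/-- A mould (at the level of evaluations) is alternal if all its shuffle sums over
pairs of nonempty words vanish. -/
def Alternal (A : List K → K) : Prop :=
  ∀ u v : List K, u ≠ [] → v ≠ [] → ((shuffles u v).map A).sum = 0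

/-- mould multiplication `mu`. -/
def mu (A B : List K → K) : List K → K :=
  fun w => ∑ k ∈ Finset.range (w.length + 1), A (w.take k) * B (w.drop k)

/-- `lu(A,B) = mu(A,B) - mu(B,A)`. -/
def lu (A B : List K → K) : List K → K :=
  fun w => mu A B w - mu B A w

/-- All decompositions of a word into two consecutive subwords. -/
def splits2 {α : Type*} (w : List α) : List (List α × List α) :=
  (List.range (w.length + 1)).map fun k => (w.take k, w.drop k)

/-- All decompositions of a word into three consecutive subwords. -/
def splits3 {α : Type*} (w : List α) : List (List α × List α × List α) :=
  (splits2 w).flatMap fun p => (splits2 p.2).map fun q => (p.1, q.1, q.2)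

/-- Add `s` to the first letter of a word. -/
def addFirst (s : K) : List K → List K
  | [] => []
  | x :: xs => (x + s) :: xs

/-- Add `s` to the last letter of a word. -/
def addLast (s : K) : List K → List K
  | [] => []
  | [x] => [x + s]
  | x :: xs => x :: addLast s xs

/-- `amit` for u-moulds: `(amit(B)·A)(w) = Σ_{w=abc, b,c≠∅} A(a⌈c) B(b)`. -/
def amitU (B A : List K → K) : List K → K := fun w =>
  ((splits3 w).map fun p =>
    match p with
    | (_, [], _) => 0
    | (_, _, []) => 0
    | (a, b, c) => A (a ++ addFirst b.sum c) * B b).sum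

/-- `anit` for u-moulds: `(anit(B)·A)(w) = Σ_{w=abc, a,b≠∅} A(a⌉c) B(b)`. -/
def anitU (B A : List K → K) : List K → K := fun w =>
  ((splits3 w).map fun p =>
    match p with
    | ([], _, _) => 0
    | (_, [], _) => 0
    | (a, b, c) => A (addLast b.sum a ++ c) * B b).sum

/-- `arit(B)·A = amit(B)·A - anit(B)·A` on u-moulds. -/
def aritU (B A : List K → K) : List K → K :=
  fun w => amitU B A w - anitU B A w

/-- the ari bracket on u-moulds. -/
def ariU (A B : List K → K) : List K → K :=
  fun w => aritU B A w + lu A B w - aritU A B w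

/-- `amit` for v-moulds. -/
def amitV (B A : List K → K) : List K → K := fun w =>
  ((splits3 w).map fun p =>
    match p with
    | (_, [], _) => 0
    | (_, _, []) => 0
    | (a, b, c0 :: c') => A (a ++ c0 :: c') * B (b.map (fun x => x - c0))).sum

/-- `anit` for v-moulds. -/
def anitV (B A : List K → K) : List K → K := fun w =>
  ((splits3 w).map fun p =>
    match p with
    | ([], _, _) => 0
    | (_, [], _) => 0
    | (a, b, c) => A (a ++ c) * B (b.map (fun x => x - a.getLastD 0))).sum

/-- `arit(B)·A = amit(B)·A - anit(B)·A` on v-moulds. -/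
def aritV (B A : List K → K) : List K → K :=
  fun w => amitV B A w - anitV B A w

/-- the ari bracket on v-moulds. -/
def ariV (A B : List K → K) : List K → K :=
  fun w => aritV B A w + lu A B w - aritV A B w

/-- `neg(A)(u_1,...,u_r) = A(-u_1,...,-u_r)`. -/
def negM (A : List K → K) : List K → K := fun w => A (w.map fun x => -x)

/-- `push(A)(u_1,...,u_r) = A(-u_1-⋯-u_r, u_1, ..., u_{r-1})`. -/
def pushM (A : List K → K) : List K → K := fun w =>
  match w with
  | [] => A []
  | _ :: _ => A ((-w.sum) :: w.dropLast)

/-- `mantar(A)(u_1,...,u_r) = (-1)^{r-1} A(u_r,...,u_1)`. -/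
def mantarM (A : List K → K) : List K → K :=
  fun w => (-1 : K) ^ (w.length + 1) * A w.reverse

/-- argument list for swap from u-moulds to v-moulds:
`(v_1,...,v_r) ↦ (v_r, v_{r-1}-v_r, ..., v_1-v_2)`. -/
def swapUargs (w : List K) : List K :=
  List.zipWith (· - ·) w.reverse (0 :: w.reverse)

/-- argument list for swap from v-moulds to u-moulds:
`(u_1,...,u_r) ↦ (u_1+⋯+u_r, u_1+⋯+u_{r-1}, ..., u_1)`. -/
def swapVargs (w : List K) : List K :=
  (List.range w.length).map fun i => (w.take (w.length - i)).sum

/-- swap, sending a u-mould to a v-mould. -/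
def swapUV (A : List K → K) : List K → K := fun w => A (swapUargs w)

/-- swap, sending a v-mould to a u-mould. -/
def swapVU (A : List K → K) : List K → K := fun w => A (swapVargs w)

/-- A constant-valued mould: its value depends only on the depth. -/
def IsConstantMould (C : List K → K) : Prop :=
  ∀ w w' : List K, w.length = w'.length → C w = C w'

section

omit [CharZero K]

theorem shuffles_nil_right {α : Type*} (u : List α) : shuffles u [] = [u] := by
  cases u <;> simp [shuffles]

theorem shuffles_cons_cons {α : Type*} (x y : α) (u v : List α) :
    shuffles (x :: u) (y :: v)
      = (shuffles u (y :: v)).map (x :: ·) ++ (shuffles (x :: u) v).map (y :: ·) := by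
  rw [shuffles]

namespace Alternal

variable {B : List K → K}

theorem sum_shuffles_reverse_cons (hB : Alternal B) (a : List K) (x : K) (c : List K) :
    ((shuffles a.reverse c).map fun l => B (x :: l)).sum
      = (-1) ^ a.length * B (a ++ x :: c) := by
  induction a using List.reverseRecOn generalizing x c with
  | nil => simp [shuffles]
  | append_singleton a y ih =>
    have hshuffle := hB (y :: a.reverse) (x :: c) (by simp) (by simp)
    rw [shuffles_cons_cons, List.map_append, List.sum_append, List.map_map, List.map_map,
      Function.comp_def, Function.comp_def, ih y (x :: c)] at hshuffle
    simp only [List.reverse_append, List.reverse_singleton, List.singleton_append,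
      List.length_append, List.length_singleton, List.append_assoc, pow_succ]
    linear_combination hshuffle

theorem apply_reverse (hB : Alternal B) {w : List K} (hw : w ≠ []) :
    B w.reverse = (-1) ^ (w.length + 1) * B w := by
  obtain ⟨a, x, rfl⟩ : ∃ a x, w = a ++ [x] :=
    ⟨w.dropLast, w.getLast hw, (List.dropLast_concat_getLast hw).symm⟩
  have h := hB.sum_shuffles_reverse_cons a x []
  simp only [shuffles_nil_right, List.map_cons, List.map_nil, List.sum_cons, List.sum_nil,
    add_zero] at h
  simp only [List.reverse_append, List.reverse_singleton, List.singleton_append, h,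
    List.length_append, List.length_singleton, pow_succ]
  ring

end Alternal

@[simp]
theorem length_swapUargs (w : List K) : (swapUargs w).length = w.length := by
  simp [swapUargs]

@[simp]
theorem length_swapVargs (w : List K) : (swapVargs w).length = w.length := by
  simp [swapVargs]

theorem getElem_swapVargs (u : List K) (i : ℕ) {h : i < (swapVargs u).length} :
    (swapVargs u)[i] = (u.take (u.length - i)).sum := by
  simp [swapVargs]

theorem swapUargs_swapVargs (u : List K) : swapUargs (swapVargs u) = u := by
  refine List.ext_getElem (by simp) fun i h₁ h₂ => ?_
  simp only [swapUargs, List.getElem_zipWith, List.getElem_reverse, length_swapVargs]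
  rcases i with _ | j
  · rw [List.getElem_cons_zero, sub_zero, getElem_swapVargs,
      show u.length - (u.length - 1 - 0) = 0 + 1 by omega, List.sum_take_succ u 0 h₂]
    simp
  · rw [List.getElem_cons_succ, List.getElem_reverse, getElem_swapVargs, getElem_swapVargs]
    simp only [length_swapVargs]
    rw [show u.length - (u.length - 1 - (j + 1)) = j + 1 + 1 by omega,
      show u.length - (u.length - 1 - j) = j + 1 by omega, List.sum_take_succ u (j + 1) h₂]
    ring

theorem swapUargs_reverse (w : List K) :
    swapUargs w.reverse = List.zipWith (· - ·) w (0 :: w) := by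
  simp [swapUargs]

theorem reverse_swapUargs_reverse_swapVargs (u : List K) (hu : u ≠ []) :
    (swapUargs (swapVargs u).reverse).reverse = u.tail.map (- ·) ++ [u.sum] := by
  have hlen : 0 < u.length := List.length_pos_iff.2 hu
  refine List.ext_getElem (by simp; omega) fun i h₁ h₂ => ?_
  simp only [swapUargs_reverse, List.length_reverse, List.length_zipWith, List.length_cons,
    length_swapVargs, min_eq_left (Nat.le_succ u.length), List.getElem_reverse,
    List.getElem_zipWith] at h₁ ⊢
  by_cases hi : i = u.length - 1
  · subst hi
    rw [List.getElem_append_right (by simp)]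
    simp [getElem_swapVargs]
  · simp only [show u.length - 1 - i = u.length - 2 - i + 1 by omega, List.getElem_cons_succ,
      getElem_swapVargs]
    rw [show u.length - (u.length - 2 - i + 1) = i + 1 by omega,
      show u.length - (u.length - 2 - i) = i + 1 + 1 by omega,
      List.sum_take_succ u (i + 1) (by omega),
      List.getElem_append_left (by simp; omega), List.getElem_map, List.getElem_tail]
    ring

theorem pushM_apply_of_ne_nil (A : List K → K) {w : List K} (hw : w ≠ []) :
    pushM A w = A (-w.sum :: w.dropLast) := by
  cases w
  · contradiction
  · rfl

theorem negM_pushM_apply_concat (A : List K → K) (a : List K) (x : K) :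
    negM (pushM A) (a ++ [x]) = A ((a.sum + x) :: a.map (- ·)) := by
  rw [negM, pushM_apply_of_ne_nil A (by simp)]
  simp [List.sum_neg, add_comm]

variable {A C : List K → K}

theorem apply_neg_tail_append_sum_of_swap_add_const (hal : Alternal A)
    (hswapal : Alternal (fun w => swapUV A w + C w)) (hC : IsConstantMould C)
    {u : List K} (hu : u ≠ []) :
    A (u.tail.map (- ·) ++ [u.sum]) = A u + (1 - (-1) ^ (u.length + 1)) * C u := by
  set v := swapVargs u
  have hswap := hswapal.apply_reverse (w := v.reverse)
    (by simpa [v, ← List.length_pos_iff] using hu)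
  have hA := hal.apply_reverse (w := swapUargs v.reverse)
    (List.ne_nil_of_length_pos (by simpa [v] using List.length_pos_iff.2 hu))
  simp only [length_swapVargs, List.reverse_reverse, List.length_reverse, swapUV, v,
    swapUargs_swapVargs, hC (swapVargs u) u (by simp),
    hC (swapVargs u).reverse u (by simp)] at hswap
  simp only [length_swapUargs, List.length_reverse, length_swapVargs, v,
    reverse_swapUargs_reverse_swapVargs u hu] at hA
  rw [hA]
  linear_combination -hswap

theorem apply_neg_tail_append_sum (hal : Alternal A)
    (hswapal : Alternal (fun w => swapUV A w + C w)) (hC : IsConstantMould C)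
    {u : List K} (hu : u ≠ []) :
    A (u.tail.map (- ·) ++ [u.sum]) = A u := by
  set z := List.replicate u.length (0 : K)
  have hz : z ≠ [] := by simpa [z] using hu
  have hz_fixed : z.tail.map (- ·) ++ [z.sum] = z := by
    simp [z, ← List.replicate_succ', Nat.sub_add_cancel (List.length_pos_iff.2 hu)]
  have hCz := apply_neg_tail_append_sum_of_swap_add_const hal hswapal hC hz
  rw [hz_fixed, left_eq_add, List.length_replicate] at hCz
  rw [apply_neg_tail_append_sum_of_swap_add_const hal hswapal hC hu,
    hC u z (List.length_replicate ..).symm, hCz, add_zero]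

end

theorem alstaral_negpush_invariant_general (A C : List K → K)
    (hal : Alternal A)
    (hC : IsConstantMould C)
    (hswapal : Alternal (fun w => swapUV A w + C w)) :
    negM (pushM A) = A := by
  funext u
  rcases u.eq_nil_or_concat with rfl | ⟨a, x, rfl⟩
  · rfl
  · have h := apply_neg_tail_append_sum hal hswapal hC
      (List.cons_ne_nil (a.sum + x) (a.map (- ·)))
    rw [List.concat_eq_append, negM_pushM_apply_concat, ← h]
    simp [← List.sum_neg]

/-- a mould in ARI_{al*al} (alternal, swap alternal up to a constant-valued
mould, even in depth 1) is invariant under `neg ∘ push`. -/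
theorem alstaral_negpush_invariant (A C : List K → K)
    (hA0 : A [] = 0) (hal : Alternal A)
    (hC : IsConstantMould C)
    (hswapal : Alternal (fun w => swapUV A w + C w))
    (heven : ∀ x : K, A [-x] = A [x]) :
    negM (pushM A) = A :=
  alstaral_negpush_invariant_general A C hal hC hswapal
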